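/- arXiv:2101.11039 — 4 statements merged into one kernel-verified Lean document; each statement's English description precedes it below -/
import Mathlib

section
/- For integers n ≥ r > 1, k ≥ 1, and l ≥ 1, the (l,r)-Stirling numbers of the first kind satisfy (r-1)^l · S1_r(n,k) = S1_{r-1}(n,k-1) − S1_r(n,k-1), where the subscript denotes the parameter r. -/
/-- The `(l,r)`-Stirling numbers of the first kind. -/
def S1 (l r : ℕ) : ℕ → ℕ → ℕ
  | n, k =>
    if _h1 : n < r then 0
    else if _h2 : n = r then (if k = r then 1 else 0)
    else S1 l r (n - 1) (k - 1) + (n - 1) ^ l * S1 l r (n - 1) k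
termination_by n _ => n
decreasing_by all_goals omega

lemma S1_lt (l r n k : ℕ) (h : n < r) : S1 l r n k = 0 := by
  rw [S1, dif_pos h]

lemma S1_base (l r k : ℕ) : S1 l r r k = if k = r then 1 else 0 := by
  rw [S1]; simp

lemma S1_rec (l r n k : ℕ) (h : r < n) :
    S1 l r n k = S1 l r (n - 1) (k - 1) + (n - 1) ^ l * S1 l r (n - 1) k := by
  rw [S1, dif_neg (by omega), dif_neg (by omega)]

lemma S1_zero (l r : ℕ) (hr : 1 ≤ r) : ∀ n, S1 l r n 0 = 0 := by
  intro n
  induction n using Nat.strong_induction_on with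
  | _ n ih =>
    rcases lt_trichotomy n r with h | h | h
    · exact S1_lt _ _ _ _ h
    · subst h; rw [S1_base]; simp; omega
    · rw [S1_rec _ _ _ _ h]
      simp [ih (n - 1) (by omega)]

lemma S1_one (l r : ℕ) (hr : 1 < r) : ∀ n, S1 l r n 1 = 0 := by
  intro n
  induction n using Nat.strong_induction_on with
  | _ n ih =>
    rcases lt_trichotomy n r with h | h | h
    · exact S1_lt _ _ _ _ h
    · subst h; rw [S1_base]; simp; omega
    · rw [S1_rec _ _ _ _ h]
      simp [ih (n - 1) (by omega), S1_zero l r (by omega)]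

theorem stmt1 (l r n k : ℕ) (hr : 1 < r) (hn : r ≤ n) (hk : 1 ≤ k) (hl : 1 ≤ l) :
    ((r - 1 : ℕ) ^ l * S1 l r n k : ℤ) =
      (S1 l (r - 1) n (k - 1) : ℤ) - (S1 l r n (k - 1) : ℤ) := by
  induction n, hn using Nat.le_induction generalizing k with
  | base =>
    rw [S1_base, S1_base, S1_rec l (r - 1) r (k - 1) (by omega)]
    rw [S1_base, S1_base]
    push_cast
    split_ifs <;> push_cast <;> (first | ring1 | (exfalso; omega))
  | succ n hrn ih =>
    rw [S1_rec l r (n + 1) k (by omega), S1_rec l (r - 1) (n + 1) (k - 1) (by omega),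
      S1_rec l r (n + 1) (k - 1) (by omega)]
    simp only [Nat.add_sub_cancel]
    rcases eq_or_lt_of_le hk with h1 | h2
    · have hk0 : k = 1 := h1.symm
      subst hk0
      simp [S1_zero l r (by omega), S1_zero l (r - 1) (by omega),
        S1_one l r hr]
    · have ih1 := ih k hk
      have ih2 := ih (k - 1) (by omega)
      have e1 : k - 1 - 1 = k - 2 := by omega
      rw [e1] at ih2 ⊢
      push_cast
      linear_combination ih2 + (n : ℤ) ^ l * ih1
end

section
/- For integers k ≥ r ≥ 1, n ≥ 0, and l ≥ 1, the second orthogonality relation ∑_j (-1)^j · S1(j,n) · S2(k,j) = (-1)^n · δ_{n,k} holds, where the sum is over all j with r ≤ j ≤ k; moreover the sum is 0 when n < r. -/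
/-- The `(l,r)`-Stirling numbers of the second kind. -/
def S2 (l r : ℕ) : ℕ → ℕ → ℕ
  | n, k =>
    if _h1 : n < r then 0
    else if _h2 : n = r then (if k = r then 1 else 0)
    else S2 l r (n - 1) (k - 1) + k ^ l * S2 l r (n - 1) k
termination_by n _ => n
decreasing_by all_goals omega

open Finset

namespace StirlingLR

variable {l r : ℕ}

lemma S1_self (n : ℕ) : S1 l r r n = if n = r then 1 else 0 := by
  rw [S1]; simp

lemma S2_self (n : ℕ) : S2 l r r n = if n = r then 1 else 0 := by
  rw [S2]; simp

lemma S1_succ {j : ℕ} (hj : r ≤ j) (n : ℕ) :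
    S1 l r (j + 1) n = S1 l r j (n - 1) + j ^ l * S1 l r j n := by
  rw [S1, dif_neg (by omega), dif_neg (by omega)]
  simp

lemma S2_succ {k : ℕ} (hk : r ≤ k) (j : ℕ) :
    S2 l r (k + 1) j = S2 l r k (j - 1) + j ^ l * S2 l r k j := by
  rw [S2, dif_neg (by omega), dif_neg (by omega)]
  simp

lemma S2_eq_zero_of_notMem_Icc {k j : ℕ} (h : j ∉ Icc r k) : S2 l r k j = 0 := by
  rw [mem_Icc] at h
  induction k using Nat.strong_induction_on generalizing j with
  | _ k ih =>
    rw [S2]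
    split_ifs
    · rfl
    · omega
    · rfl
    · rw [ih (k - 1) (by omega) (by omega), ih (k - 1) (by omega) (by omega)]
      ring

lemma sum_S1_mul_S2_succ (hr : 1 ≤ r) {k : ℕ} (hk : r ≤ k) (n : ℕ) :
    ∑ j ∈ Icc r (k + 1), (-1 : ℤ) ^ j * S1 l r j n * S2 l r (k + 1) j =
      -∑ j ∈ Icc r k, (-1 : ℤ) ^ j * S1 l r j (n - 1) * S2 l r k j := by
  have hshift : ∑ j ∈ Icc r (k + 1), (-1 : ℤ) ^ j * S1 l r j n * S2 l r k (j - 1) =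
      ∑ j ∈ Icc r k, (-1 : ℤ) ^ (j + 1) * S1 l r (j + 1) n * S2 l r k j := by
    rw [← insert_Icc_add_one_left_eq_Icc (by omega), sum_insert (by simp),
      S2_eq_zero_of_notMem_Icc (by simp; omega), ← map_add_right_Icc, sum_map]
    simp
  have hdrop : ∑ j ∈ Icc r (k + 1), (-1 : ℤ) ^ j * (j : ℤ) ^ l * S1 l r j n * S2 l r k j =
      ∑ j ∈ Icc r k, (-1 : ℤ) ^ j * (j : ℤ) ^ l * S1 l r j n * S2 l r k j := by
    rw [sum_Icc_succ_top (by omega), S2_eq_zero_of_notMem_Icc (by simp)]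
    simp
  calc _ = ∑ j ∈ Icc r (k + 1), (-1 : ℤ) ^ j * S1 l r j n * S2 l r k (j - 1) +
        ∑ j ∈ Icc r (k + 1), (-1 : ℤ) ^ j * (j : ℤ) ^ l * S1 l r j n * S2 l r k j := by
        rw [← sum_add_distrib]
        refine sum_congr rfl fun j _ => ?_
        rw [S2_succ hk]
        push_cast
        ring
    _ = ∑ j ∈ Icc r k, (-1 : ℤ) ^ (j + 1) * S1 l r (j + 1) n * S2 l r k j +
        ∑ j ∈ Icc r k, (-1 : ℤ) ^ j * (j : ℤ) ^ l * S1 l r j n * S2 l r k j := by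
        rw [hshift, hdrop]
    _ = _ := by
        rw [← sum_add_distrib, ← sum_neg_distrib]
        refine sum_congr rfl fun j hj => ?_
        rw [S1_succ (mem_Icc.1 hj).1]
        push_cast
        ring

end StirlingLR

open StirlingLR in
theorem stmt7_general (l r n k : ℕ) (hr : 1 ≤ r) (hk : r ≤ k) :
    ∑ j ∈ Finset.Icc r k, (-1 : ℤ) ^ j * (S1 l r j n : ℤ) * (S2 l r k j : ℤ) =
      (-1 : ℤ) ^ n * (if n = k then 1 else 0) := by
  induction k, hk using Nat.le_induction generalizing n with
  | base =>
    rw [Icc_self, sum_singleton, S1_self, S2_self]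
    split_ifs <;> simp_all
  | succ k hk ih =>
    rw [sum_S1_mul_S2_succ hr hk, ih]
    rcases n with _ | n
    · simp [show 0 ≠ k by omega]
    · simp only [Nat.add_sub_cancel, add_left_inj]
      split_ifs <;> ring

theorem stmt7 (l r n k : ℕ) (hr : 1 ≤ r) (hk : r ≤ k) (hl : 1 ≤ l) :
    ∑ j ∈ Finset.Icc r k, (-1 : ℤ) ^ j * (S1 l r j n : ℤ) * (S2 l r k j : ℤ) =
      (-1 : ℤ) ^ n * (if n = k then 1 else 0) :=
  stmt7_general l r n k hr hk
end

section
/- For integers n ≥ r ≥ 1 and l ≥ 1, the ordinary generating polynomial of the (l,r)-Stirling numbers of the first kind in the variable z satisfies ∑_k S1(n,k)·z^k = z^r · ∏_{i=r}^{n-1} (z + i^l), as polynomials (equivalently, for all real/complex z). -/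
lemma S1_gt (l r : ℕ) : ∀ n k, n < k → S1 l r n k = 0 := by
  intro n
  induction n using Nat.strong_induction_on with
  | _ n ih =>
    intro k hk
    rw [S1]
    split
    · rfl
    · split
      · simp; omega
      · rw [ih (n - 1) (by omega) (k - 1) (by omega), ih (n - 1) (by omega) k (by omega)]
        simp

theorem stmt10 (l r n : ℕ) (hr : 1 ≤ r) (hn : r ≤ n) (hl : 1 ≤ l) (z : ℝ) :
    ∑ k ∈ Finset.range (n + 1), (S1 l r n k : ℝ) * z ^ k =
      z ^ r * ∏ i ∈ Finset.Ico r n, (z + (i : ℝ) ^ l) := by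
  induction n, hn using Nat.le_induction with
  | base =>
    simp only [Finset.Ico_self, Finset.prod_empty, mul_one]
    have : ∀ k, (S1 l r r k : ℝ) = if k = r then 1 else 0 := by
      intro k
      rw [S1]
      simp
    simp only [this, ite_mul, one_mul, zero_mul]
    rw [Finset.sum_ite_eq' (Finset.range (r + 1)) r (fun k => z ^ k)]
    simp
  | succ n hn ih =>
    have hS : ∀ k, S1 l r (n + 1) k = S1 l r n (k - 1) + n ^ l * S1 l r n k := by
      intro k
      rw [S1]
      have h1 : ¬ n + 1 < r := by omega
      have h2 : ¬ n + 1 = r := by omega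
      simp [h1, h2]
    have key : ∑ k ∈ Finset.range (n + 2), (S1 l r (n + 1) k : ℝ) * z ^ k =
        z * (∑ k ∈ Finset.range (n + 1), (S1 l r n k : ℝ) * z ^ k)
        + (n : ℝ) ^ l * (∑ k ∈ Finset.range (n + 1), (S1 l r n k : ℝ) * z ^ k) := by
      simp only [hS, Nat.cast_add, Nat.cast_mul, Nat.cast_pow, add_mul, Finset.sum_add_distrib]
      congr 1
      · rw [Finset.sum_range_succ' (fun k => (S1 l r n (k - 1) : ℝ) * z ^ k) (n + 1)]
        simp only [Nat.add_sub_cancel, Nat.zero_sub, S1_zero l r hr, Nat.cast_zero, zero_mul,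
          add_zero, pow_zero, Finset.mul_sum]
        congr 1
        ext k
        ring
      · simp only [mul_assoc]
        rw [Finset.sum_range_succ (fun k => (n : ℝ) ^ l * ((S1 l r n k : ℝ) * z ^ k)) (n + 1),
          S1_gt l r n (n + 1) (by omega)]
        simp [Finset.mul_sum]
    rw [key, ih, Finset.prod_Ico_succ_top hn]
    ring
end

section
/- For every integer k ≥ 1, lim_{n→∞} S1(n+1, k+1)/(n!)^2 = π^{2k}/(2k+1)!, where S1 denotes the (2,1)-Stirling numbers of the first kind. -/
/-!
Unwinding the recurrence gives `S1 2 1 (n + 1) (k + 1) = (n!)² · e_k(1/1², …, 1/n²)`. For fixed `k`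
these elementary symmetric sums increase with `n` to a limit `c_k = ζ({2}_k)`, bounded by
`exp (π² / 6)`. Since `∏_{j ≤ n} (1 + x / j²) = ∑_k e_k(1/1², …, 1/n²) xᵏ`, Tannery's theorem gives
`∑_k c_k xᵏ = ∏_{j ≥ 1} (1 + x / j²)` for `|x| < 1`, and for `x = -y²` Euler's sine product turns
this into `sin (π y) / (π y) = ∑_k π^(2k) / (2k+1)! · (-y²)ᵏ`. Two convergent power series that
agree on `(-1, 0)` have the same coefficients, so `c_k = π^(2k) / (2k+1)!`.
-/

open Filter Topology Finset Real Nat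

theorem Multiset.esymm_cons_succ {R : Type*} [CommSemiring R] (a : R) (s : Multiset R) (k : ℕ) :
    (a ::ₘ s).esymm (k + 1) = s.esymm (k + 1) + a * s.esymm k := by
  simp only [Multiset.esymm, Multiset.powersetCard_cons, Multiset.map_add, Multiset.sum_add,
    Multiset.map_map, Function.comp_def, Multiset.prod_cons, Multiset.sum_map_mul_left]

theorem Finset.prod_one_add_mul_eq_sum_esymm {ι R : Type*} [CommSemiring R] (s : Finset ι)
    (f : ι → R) (x : R) :
    ∏ i ∈ s, (1 + x * f i) = ∑ k ∈ range (#s + 1), (s.val.map f).esymm k * x ^ k := by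
  rw [prod_one_add, sum_powerset]
  refine sum_congr rfl fun k _ => ?_
  rw [esymm_map_val, sum_mul]
  refine sum_congr rfl fun t ht => ?_
  rw [prod_mul_distrib, prod_const, (mem_powersetCard.1 ht).2, mul_comm]

namespace FormalMultilinearSeries

variable {𝕜 : Type*} [NontriviallyNormedField 𝕜]

theorem one_le_ofScalars_radius_of_bound {a : ℕ → 𝕜} {C : ℝ} (h : ∀ n, ‖a n‖ ≤ C) :
    1 ≤ (ofScalars 𝕜 a).radius := by
  simpa using (ofScalars 𝕜 a).le_radius_of_bound C (r := 1) fun n => by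
    simpa [ofScalars_norm] using h n

theorem ofScalars_eq_of_frequently_eq [CompleteSpace 𝕜] {a b : ℕ → 𝕜}
    (ha : 0 < (ofScalars 𝕜 a).radius) (hb : 0 < (ofScalars 𝕜 b).radius)
    (h : ∃ᶠ x in 𝓝[≠] 0, ∑' n, a n * x ^ n = ∑' n, b n * x ^ n) : a = b := by
  have hA := ((ofScalars 𝕜 a).hasFPowerSeriesOnBall ha).hasFPowerSeriesAt
  have hB := ((ofScalars 𝕜 b).hasFPowerSeriesOnBall hb).hasFPowerSeriesAt
  have hsum (c : ℕ → 𝕜) (x : 𝕜) : (ofScalars 𝕜 c).sum x = ∑' n, c n * x ^ n :=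
    ofScalars_sum_eq c x
  refine ofScalars_series_injective 𝕜 𝕜 (hA.eq_formalMultilinearSeries_of_eventually hB ?_)
  rw [← hA.analyticAt.frequently_eq_iff_eventually_eq hB.analyticAt]
  simpa only [hsum] using h

end FormalMultilinearSeries

/-- `e_k(1/1², …, 1/n²)`. -/
noncomputable def invSqEsymm (n k : ℕ) : ℝ :=
  ((range n).val.map fun j : ℕ => ((j + 1 : ℝ) ^ 2)⁻¹).esymm k

lemma invSqEsymm_zero_right (n : ℕ) : invSqEsymm n 0 = 1 := by
  simp [invSqEsymm, Multiset.esymm]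

lemma invSqEsymm_of_lt {n k : ℕ} (h : n < k) : invSqEsymm n k = 0 := by
  rw [invSqEsymm, Multiset.esymm, Multiset.powersetCard_eq_empty _ (by simpa using h)]
  simp

lemma invSqEsymm_succ_succ (n k : ℕ) :
    invSqEsymm (n + 1) (k + 1) = invSqEsymm n (k + 1) + ((n + 1 : ℝ) ^ 2)⁻¹ * invSqEsymm n k := by
  simp only [invSqEsymm, range_val, Multiset.range_succ, Multiset.map_cons,
    Multiset.esymm_cons_succ]

lemma invSqEsymm_nonneg (n k : ℕ) : 0 ≤ invSqEsymm n k := by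
  rw [invSqEsymm, esymm_map_val]
  exact sum_nonneg fun t _ => prod_nonneg fun j _ => by positivity

lemma prod_one_add_mul_inv_sq (n : ℕ) (x : ℝ) :
    ∏ j ∈ range n, (1 + x * ((j + 1 : ℝ) ^ 2)⁻¹) =
      ∑ k ∈ range (n + 1), invSqEsymm n k * x ^ k := by
  rw [prod_one_add_mul_eq_sum_esymm, card_range]
  rfl

lemma hasSum_invSqEsymm_mul_pow (n : ℕ) (x : ℝ) :
    HasSum (fun k => invSqEsymm n k * x ^ k) (∏ j ∈ range n, (1 + x * ((j + 1 : ℝ) ^ 2)⁻¹)) := by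
  rw [prod_one_add_mul_inv_sq]
  exact hasSum_sum_of_ne_finset_zero fun k hk => by
    rw [invSqEsymm_of_lt (by simpa [Nat.lt_succ_iff] using hk), zero_mul]

lemma sum_range_inv_sq_le (n : ℕ) : ∑ j ∈ range n, ((j + 1 : ℝ) ^ 2)⁻¹ ≤ π ^ 2 / 6 := by
  have := sum_le_hasSum (range (n + 1)) (fun _ _ => by positivity) hasSum_zeta_two
  simpa [sum_range_succ'] using this

lemma invSqEsymm_le (n k : ℕ) : invSqEsymm n k ≤ exp (π ^ 2 / 6) :=
  calc invSqEsymm n k ≤ ∑ i ∈ range (n + 1), invSqEsymm n i := by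
        rcases lt_or_ge n k with h | h
        · rw [invSqEsymm_of_lt h]
          exact sum_nonneg fun i _ => invSqEsymm_nonneg n i
        · exact single_le_sum (fun i _ => invSqEsymm_nonneg n i) (by simpa [Nat.lt_succ_iff])
    _ = ∏ j ∈ range n, (1 + ((j + 1 : ℝ) ^ 2)⁻¹) := by
        simpa using (prod_one_add_mul_inv_sq n 1).symm
    _ ≤ exp (∑ j ∈ range n, ((j + 1 : ℝ) ^ 2)⁻¹) :=
        prod_one_add_le_exp_sum _ fun j => by positivity
    _ ≤ exp (π ^ 2 / 6) := exp_le_exp.2 (sum_range_inv_sq_le n)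

lemma monotone_invSqEsymm (k : ℕ) : Monotone (invSqEsymm · k) := by
  refine monotone_nat_of_le_succ fun n => ?_
  cases k with
  | zero => simp [invSqEsymm_zero_right]
  | succ k =>
    rw [invSqEsymm_succ_succ, le_add_iff_nonneg_right]
    have := invSqEsymm_nonneg n k
    positivity

lemma S1_two_one_one (k : ℕ) : S1 2 1 1 k = if k = 1 then 1 else 0 := by
  rw [S1]; simp

lemma S1_two_one_succ_succ (n k : ℕ) :
    S1 2 1 (n + 2) (k + 1) = S1 2 1 (n + 1) k + (n + 1) ^ 2 * S1 2 1 (n + 1) (k + 1) := by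
  rw [S1]; simp

lemma S1_two_one_succ_zero (n : ℕ) : S1 2 1 (n + 1) 0 = 0 := by
  induction n with
  | zero => simp [S1_two_one_one]
  | succ n ih => rw [S1]; simp [ih]

theorem S1_two_one_eq_mul_invSqEsymm (n k : ℕ) :
    (S1 2 1 (n + 1) (k + 1) : ℝ) = (n ! : ℝ) ^ 2 * invSqEsymm n k := by
  induction n generalizing k with
  | zero =>
    rcases k with _ | k
    · simp [S1_two_one_one, invSqEsymm_zero_right]
    · simp [S1_two_one_one, invSqEsymm_of_lt]
  | succ n ih =>
    rw [S1_two_one_succ_succ, factorial_succ]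
    rcases k with _ | k
    · simp only [S1_two_one_succ_zero, zero_add]
      push_cast
      rw [ih, invSqEsymm_zero_right, invSqEsymm_zero_right]
      ring
    · push_cast
      rw [ih, ih, invSqEsymm_succ_succ]
      field_simp
      ring

/-- The multiple zeta value `ζ({2}_k)`. -/
noncomputable def zetaTwos (k : ℕ) : ℝ := ⨆ n, invSqEsymm n k

lemma bddAbove_range_invSqEsymm (k : ℕ) : BddAbove (Set.range (invSqEsymm · k)) :=
  ⟨exp (π ^ 2 / 6), by rintro _ ⟨n, rfl⟩; exact invSqEsymm_le n k⟩

lemma tendsto_invSqEsymm (k : ℕ) : Tendsto (invSqEsymm · k) atTop (𝓝 (zetaTwos k)) :=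
  tendsto_atTop_ciSup (monotone_invSqEsymm k) (bddAbove_range_invSqEsymm k)

lemma zetaTwos_nonneg (k : ℕ) : 0 ≤ zetaTwos k :=
  le_ciSup_of_le (bddAbove_range_invSqEsymm k) 0 (invSqEsymm_nonneg 0 k)

lemma zetaTwos_le (k : ℕ) : zetaTwos k ≤ exp (π ^ 2 / 6) :=
  ciSup_le fun n => invSqEsymm_le n k

lemma tendsto_prod_one_add_mul_inv_sq {x : ℝ} (hx : |x| < 1) :
    Tendsto (fun n => ∏ j ∈ range n, (1 + x * ((j + 1 : ℝ) ^ 2)⁻¹)) atTop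
      (𝓝 (∑' k, zetaTwos k * x ^ k)) := by
  have := tendsto_tsum_of_dominated_convergence (f := fun n k => invSqEsymm n k * x ^ k)
    (bound := fun k => exp (π ^ 2 / 6) * |x| ^ k)
    ((summable_geometric_of_lt_one (abs_nonneg x) hx).mul_left _)
    (fun k => (tendsto_invSqEsymm k).mul_const _) (Eventually.of_forall fun n k => ?_)
  · simpa only [(hasSum_invSqEsymm_mul_pow _ x).tsum_eq] using this
  · rw [norm_mul, norm_pow, Real.norm_eq_abs, Real.norm_eq_abs,
      abs_of_nonneg (invSqEsymm_nonneg n k)]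
    gcongr
    exact invSqEsymm_le n k

lemma tsum_zetaTwos_mul_neg_sq {y : ℝ} (hy₀ : y ≠ 0) (hy₁ : |y| < 1) :
    ∑' k, zetaTwos k * (-y ^ 2) ^ k = sin (π * y) / (π * y) := by
  have hprod := tendsto_prod_one_add_mul_inv_sq (x := -y ^ 2)
    (by rwa [abs_neg, abs_of_nonneg (sq_nonneg y), sq_lt_one_iff_abs_lt_one])
  have hπy : π * y ≠ 0 := mul_ne_zero pi_ne_zero hy₀
  refine tendsto_nhds_unique hprod
    (((tendsto_euler_sin_prod y).div_const (π * y)).congr fun n => ?_)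
  rw [mul_div_right_comm, div_self hπy, one_mul]
  exact prod_congr rfl fun j _ => by ring

lemma hasSum_sin_div {y : ℝ} (hy : y ≠ 0) :
    HasSum (fun k : ℕ => π ^ (2 * k) / (2 * k + 1)! * (-y ^ 2) ^ k) (sin (π * y) / (π * y)) := by
  refine ((hasSum_sin (π * y)).div_const (π * y)).congr_fun fun k => ?_
  have hπy : π * y ≠ 0 := mul_ne_zero pi_ne_zero hy
  rw [neg_pow, show (π * y) ^ (2 * k + 1) = π ^ (2 * k) * (y ^ 2) ^ k * (π * y) by ring]
  field_simp

lemma pi_pow_div_factorial_le_exp_pi (k : ℕ) : π ^ (2 * k) / (2 * k + 1)! ≤ exp π :=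
  calc π ^ (2 * k) / (2 * k + 1)! ≤ π ^ (2 * k) / (2 * k)! := by
        gcongr
        omega
    _ ≤ exp π := pow_div_factorial_le_exp _ pi_nonneg _

theorem zetaTwos_eq (k : ℕ) : zetaTwos k = π ^ (2 * k) / (2 * k + 1)! := by
  have hagree : ∀ x ∈ Set.Ioo (-1 : ℝ) 0,
      ∑' n, zetaTwos n * x ^ n = ∑' n : ℕ, π ^ (2 * n) / (2 * n + 1)! * x ^ n := by
    rintro x ⟨hx₁, hx₀⟩
    obtain ⟨y, hy₀, hy₁, rfl⟩ : ∃ y : ℝ, 0 < y ∧ y < 1 ∧ -y ^ 2 = x :=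
      ⟨√(-x), sqrt_pos.2 (by linarith), by rw [sqrt_lt' one_pos]; linarith,
        by rw [sq_sqrt] <;> linarith⟩
    rw [tsum_zetaTwos_mul_neg_sq hy₀.ne' (by rwa [abs_of_pos hy₀]),
      (hasSum_sin_div hy₀.ne').tsum_eq]
  refine congrFun (FormalMultilinearSeries.ofScalars_eq_of_frequently_eq (a := zetaTwos)
    (b := fun n : ℕ => π ^ (2 * n) / (2 * n + 1)!) ?_ ?_ ?_) k
  · refine one_pos.trans_le (FormalMultilinearSeries.one_le_ofScalars_radius_of_bound
      (C := exp (π ^ 2 / 6)) fun n => ?_)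
    rw [Real.norm_eq_abs, abs_of_nonneg (zetaTwos_nonneg n)]
    exact zetaTwos_le n
  · refine one_pos.trans_le (FormalMultilinearSeries.one_le_ofScalars_radius_of_bound
      (C := exp π) fun n => ?_)
    rw [Real.norm_eq_abs, abs_of_nonneg (by positivity)]
    exact pi_pow_div_factorial_le_exp_pi n
  · exact (eventually_of_mem (Ioo_mem_nhdsLT (by norm_num)) hagree).frequently.filter_mono
      (nhdsLT_le_nhdsNE 0)

open Filter in
theorem stmt17_general (k : ℕ) :
    Tendsto (fun n : ℕ => (S1 2 1 (n + 1) (k + 1) : ℝ) / (n.factorial : ℝ) ^ 2)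
      atTop (nhds (Real.pi ^ (2 * k) / ((2 * k + 1).factorial : ℝ))) := by
  have hfac (n : ℕ) : (n ! : ℝ) ^ 2 ≠ 0 := by positivity
  simp_rw [S1_two_one_eq_mul_invSqEsymm, mul_div_cancel_left₀ _ (hfac _), ← zetaTwos_eq]
  exact tendsto_invSqEsymm k

open Filter in
theorem stmt17 (k : ℕ) (hk : 1 ≤ k) :
    Tendsto (fun n : ℕ => (S1 2 1 (n + 1) (k + 1) : ℝ) / (n.factorial : ℝ) ^ 2)
      atTop (nhds (Real.pi ^ (2 * k) / ((2 * k + 1).factorial : ℝ))) :=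
  stmt17_general k
end
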